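/- Define g(q) = 3/4 - q + ((√2 - 1)/4)·√(4(2q-1)² - 1) for q ∈ [3/4, (2+√2)/4]. Then g(3/4) = 0 and g((2+√2)/4) = 0, and g(q) ≥ 0 for all q in this interval. -/
import Mathlib


noncomputable def gGap (q : ℝ) : ℝ :=
  3 / 4 - q + (Real.sqrt 2 - 1) / 4 * Real.sqrt (4 * (2 * q - 1) ^ 2 - 1)

theorem stmt_3 :
    gGap (3 / 4) = 0 ∧ gGap ((2 + Real.sqrt 2) / 4) = 0 ∧
    ∀ q ∈ Set.Icc (3 / 4 : ℝ) ((2 + Real.sqrt 2) / 4), 0 ≤ gGap q := by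
  have hs2 : Real.sqrt 2 ^ 2 = 2 := Real.sq_sqrt (by norm_num)
  have hs1 : (1 : ℝ) ≤ Real.sqrt 2 := by
    nlinarith [Real.sqrt_nonneg 2, hs2]
  set s := Real.sqrt 2 with hs
  refine ⟨?_, ?_, ?_⟩
  · unfold gGap
    norm_num
  · unfold gGap
    have h1 : 4 * (2 * ((2 + s) / 4) - 1) ^ 2 - 1 = 1 := by nlinarith [hs2]
    rw [h1, Real.sqrt_one]
    ring
  · intro q hq
    obtain ⟨hq1, hq2⟩ := hq
    unfold gGap
    have hA : (0 : ℝ) ≤ 4 * (2 * q - 1) ^ 2 - 1 := by nlinarith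
    have hc : (0 : ℝ) ≤ (s - 1) / 4 := by linarith
    have key : (q - 3 / 4) ^ 2 ≤ ((s - 1) / 4) ^ 2 * (4 * (2 * q - 1) ^ 2 - 1) := by
      nlinarith [mul_nonneg (mul_nonneg (sub_nonneg.2 hq1) (sub_nonneg.2 hq2))
        (sub_nonneg.2 hs1), hs2]
    have h2 : q - 3 / 4 ≤ (s - 1) / 4 * Real.sqrt (4 * (2 * q - 1) ^ 2 - 1) := by
      have := Real.sqrt_le_sqrt key
      rwa [Real.sqrt_sq (by linarith), Real.sqrt_mul (sq_nonneg _),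
        Real.sqrt_sq hc] at this
    linarith
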